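/- arXiv:2601.15670 — 2 statements merged into one kernel-verified Lean document; each statement's English description precedes it below -/
import Mathlib

section
/- Let z ≥ 1 and let p = (p_1, ..., p_k) be a partition. Define d(p) = s(p_1;z) + s(p_2;z) + ... + s(p_k;z), where s(m;z) = (z^a, b) for m = az + b, 0 ≤ b < z, and + denotes the partition sum (componentwise addition of the sorted part sequences, padded with zeros). Then the first (largest) part of d(p) equals Σ_i min(p_i, z), which also equals the number of boxes in the first z columns of the Young diagram of p, i.e. Σ_{j=1}^{z} p^⊤_j where p^⊤ is the transpose (conjugate) partition. -/
namespace PartStmt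

/-- Sorted (nonincreasing) list of parts of a partition, represented as a multiset. -/
def parts (m : Multiset ℕ) : List ℕ := (m.sort (· ≤ ·)).reverse

/-- The `i`-th part (0-indexed), with `0` beyond the length. -/
def part (m : Multiset ℕ) (i : ℕ) : ℕ := (parts m).getD i 0

/-- Partial sum of the `k` largest parts. -/
def psum (m : Multiset ℕ) (k : ℕ) : ℕ := ∑ i ∈ Finset.range k, part m i

/-- Dominance order: every partial sum of `l` is at most that of `m`. -/
def Dom (l m : Multiset ℕ) : Prop := ∀ k, psum l k ≤ psum m k

/-- Strict dominance. -/
def StrictDom (l m : Multiset ℕ) : Prop := Dom l m ∧ l ≠ m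

/-- Componentwise sum of two partitions (sorted part sequences added, zero padding). -/
def psAdd (l m : Multiset ℕ) : Multiset ℕ :=
  ((Multiset.range (Multiset.card l + Multiset.card m)).map
    (fun i => part l i + part m i)).filter (0 < ·)

/-- The transpose (conjugate) partition: the `j`-th column length `#{x ∈ m : x ≥ j+1}`. -/
def transpose (m : Multiset ℕ) : Multiset ℕ :=
  ((Multiset.range m.sum).map
    (fun j => Multiset.card (m.filter (fun x => j + 1 ≤ x)))).filter (0 < ·)

/-- The partition `s(m; z) = (z^a, b)` where `m = a z + b`, `0 ≤ b < z`. -/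
def sPart (m z : ℕ) : Multiset ℕ :=
  Multiset.replicate (m / z) z + (if m % z = 0 then 0 else {m % z})

/-- `d_com^{(z)}(p) = Σ_i s(p_i; z)` (componentwise partition sum). -/
def dcom (z : ℕ) (p : Multiset ℕ) : Multiset ℕ :=
  (parts p).foldr (fun x acc => psAdd (sPart x z) acc) 0

/-- A multiset is a partition when all its parts are positive. -/
def IsPartition (m : Multiset ℕ) : Prop := ∀ x ∈ m, 0 < x



section Aux

lemma parts_coe (l : List ℕ) (h : l.Pairwise (· ≥ ·)) : parts (l : Multiset ℕ) = l := by
  have h1 : ((l : Multiset ℕ).sort (· ≤ ·)) = l.reverse := by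
    refine (fun hp h1 h2 => List.Perm.eq_of_pairwise' (r := (· ≤ ·)) h1 h2 hp) ?_ ?_ ?_
    · exact (Multiset.coe_eq_coe.mp (Multiset.sort_eq (l:Multiset ℕ) (· ≤ ·))).trans
        (List.reverse_perm l).symm
    · exact Multiset.pairwise_sort _ _
    · rw [List.pairwise_reverse]; exact h
  simp [parts, h1]

lemma countP_range_le (g : ℕ → Bool) (n j : ℕ) (h : ∀ i, g i = true → i < j) :
    (List.range n).countP g ≤ j := by
  rw [List.countP_eq_length_filter]
  have hnd : ((List.range n).filter g).Nodup := List.nodup_range.filter g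
  calc ((List.range n).filter g).length = ((List.range n).filter g).toFinset.card := by
        rw [List.toFinset_card_of_nodup hnd]
    _ ≤ (Finset.range j).card := by
        apply Finset.card_le_card
        intro x hx
        rw [List.mem_toFinset, List.mem_filter] at hx
        simpa using h x hx.2
    _ = j := Finset.card_range j

lemma getD_filter (f : ℕ → ℕ) (n : ℕ) (hf : ∀ i j, i ≤ j → f j ≤ f i)
    (h0 : ∀ j, n ≤ j → f j = 0) (j : ℕ) :
    (((List.range n).map f).filter (fun x => 0 < x)).getD j 0 = f j := by
  by_cases hpos : 0 < f j
  · have hjn : j < n := by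
      by_contra h
      rw [h0 j (le_of_not_gt h)] at hpos; exact absurd hpos (lt_irrefl 0)
    have htake : ((List.range n).map f).take (j+1) = (List.range (j+1)).map f := by
      rw [← List.map_take, List.take_range, min_eq_left hjn]
    have hsplit : ((List.range n).map f).filter (fun x => 0 < x)
        = (List.range (j+1)).map f ++ (((List.range n).map f).drop (j+1)).filter (fun x => 0 < x) := by
      conv_lhs => rw [← List.take_append_drop (j+1) ((List.range n).map f)]
      rw [List.filter_append, htake]
      congr 1
      rw [List.filter_eq_self]
      intro a ha
      rw [List.mem_map] at ha
      obtain ⟨i, hi, rfl⟩ := ha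
      rw [List.mem_range] at hi
      have : f j ≤ f i := hf i j (Nat.lt_succ_iff.mp hi)
      simpa using lt_of_lt_of_le hpos this
    rw [hsplit, List.getD_append _ _ _ j (by simp), List.getD_eq_getElem?_getD,
      List.getElem?_map, List.getElem?_range (Nat.lt_succ_self j)]
    rfl
  · have hfj : f j = 0 := Nat.eq_zero_of_not_pos hpos
    rw [hfj]
    apply List.getD_eq_default
    rw [← List.countP_eq_length_filter, List.countP_map]
    apply countP_range_le
    intro i hi
    by_contra h
    have := hf j i (le_of_not_gt h)
    simp only [Function.comp] at hi
    rw [hfj] at this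
    simp at hi
    omega

/-- `part` of a filtered antitone range map is the function itself. -/
lemma part_filter_antitone (f : ℕ → ℕ) (n : ℕ) (hf : ∀ i j, i ≤ j → f j ≤ f i)
    (h0 : ∀ j, n ≤ j → f j = 0) (j : ℕ) :
    part (((Multiset.range n).map f).filter (0 < ·)) j = f j := by
  have hco : (((Multiset.range n).map f).filter (0 < ·)) =
      ((((List.range n).map f).filter (fun x => 0 < x)) : Multiset ℕ) := by
    simp [Multiset.range]
  rw [part, hco, parts_coe, getD_filter f n hf h0]
  apply List.Pairwise.filter
  apply List.Pairwise.map (R := (· < ·))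
  · intro a b hab; exact hf a b hab.le
  · exact List.pairwise_lt_range

lemma parts_pairwise (m : Multiset ℕ) : (parts m).Pairwise (· ≥ ·) := by
  rw [parts, List.pairwise_reverse]
  exact Multiset.pairwise_sort m (· ≤ ·)

lemma length_parts (m : Multiset ℕ) : (parts m).length = Multiset.card m := by
  simp [parts]

lemma getD_antitone {l : List ℕ} (h : l.Pairwise (· ≥ ·)) {i j : ℕ} (hij : i ≤ j) :
    l.getD j 0 ≤ l.getD i 0 := by
  by_cases hj : j < l.length
  · have hi : i < l.length := lt_of_le_of_lt hij hj
    rw [List.getD_eq_getElem _ _ hj, List.getD_eq_getElem _ _ hi]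
    rcases eq_or_lt_of_le hij with rfl | hlt
    · exact le_refl _
    · exact List.pairwise_iff_getElem.mp h i j hi hj hlt
  · rw [List.getD_eq_default _ _ (le_of_not_gt hj)]
    exact Nat.zero_le _

lemma part_antitone (m : Multiset ℕ) {i j : ℕ} (hij : i ≤ j) : part m j ≤ part m i :=
  getD_antitone (parts_pairwise m) hij

lemma part_eq_zero (m : Multiset ℕ) {j : ℕ} (hj : Multiset.card m ≤ j) : part m j = 0 :=
  List.getD_eq_default _ _ (by rw [length_parts]; exact hj)

lemma part_zero_mem_or (m : Multiset ℕ) : part m 0 ∈ m ∨ part m 0 = 0 := by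
  by_cases h : m = 0
  · right; simp [part, parts, h]
  · left
    have hlen : 0 < (parts m).length := by
      rw [length_parts]; simpa [Multiset.card_pos] using h
    have : part m 0 ∈ parts m := by
      rw [part, List.getD_eq_getElem _ _ hlen]
      exact List.getElem_mem _
    rw [parts, List.mem_reverse] at this
    rwa [← Multiset.mem_sort (· ≤ ·)]

lemma le_part_zero {m : Multiset ℕ} {x : ℕ} (hx : x ∈ m) : x ≤ part m 0 := by
  rw [← Multiset.mem_sort (α := ℕ) (· ≤ ·), ← List.mem_reverse, ← parts] at hx
  obtain ⟨i, hi, hgi⟩ := List.getElem_of_mem hx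
  rw [← List.getD_eq_getElem _ 0 hi] at hgi
  rw [← hgi]
  exact getD_antitone (parts_pairwise m) (Nat.zero_le i)

lemma part_zero_eq_sup (m : Multiset ℕ) : part m 0 = m.sup := by
  apply le_antisymm
  · rcases part_zero_mem_or m with h | h
    · exact Multiset.le_sup h
    · rw [h]; exact Nat.zero_le _
  · exact Multiset.sup_le.mpr fun x hx => le_part_zero hx

lemma part_sPart_zero (m z : ℕ) (hz : 1 ≤ z) : part (sPart m z) 0 = min m z := by
  rw [part_zero_eq_sup, sPart, Multiset.sup_add]
  rcases Nat.lt_or_ge m z with h | h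
  · have h1 : m / z = 0 := Nat.div_eq_of_lt h
    have h2 : m % z = m := Nat.mod_eq_of_lt h
    rw [h1, h2]
    by_cases hm : m = 0
    · simp [hm]
    · simp [hm, Multiset.sup_singleton]
      omega
  · have h1 : 0 < m / z := Nat.div_pos h hz
    have hsup : (Multiset.replicate (m / z) z).sup = z := by
      apply le_antisymm
      · exact Multiset.sup_le.mpr fun x hx => by
          rw [Multiset.eq_of_mem_replicate hx]
      · exact Multiset.le_sup (Multiset.mem_replicate.mpr ⟨by omega, rfl⟩)
    rw [hsup, min_eq_right h]
    apply le_antisymm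
    · apply sup_le (le_refl z)
      apply Multiset.sup_le.mpr
      intro x hx
      split at hx
      · simp at hx
      · rw [Multiset.mem_singleton] at hx
        subst hx
        exact le_of_lt (Nat.mod_lt m (by omega))
    · exact le_sup_left

lemma part_psAdd (l m : Multiset ℕ) (j : ℕ) : part (psAdd l m) j = part l j + part m j := by
  apply part_filter_antitone
  · intro i k hik
    exact Nat.add_le_add (part_antitone l hik) (part_antitone m hik)
  · intro k hk
    rw [part_eq_zero l (by omega), part_eq_zero m (by omega)]

lemma part_transpose (m : Multiset ℕ) (j : ℕ) :
    part (transpose m) j = Multiset.card (m.filter (fun x => j + 1 ≤ x)) := by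
  apply part_filter_antitone
  · intro i k hik
    apply Multiset.card_le_card
    apply Multiset.monotone_filter_right
    intro x hx; omega
  · intro k hk
    rw [Multiset.card_eq_zero, Multiset.filter_eq_nil]
    intro x hx
    have hxs : x ≤ m.sum := Multiset.le_sum_of_mem hx
    omega

lemma part_zero_zero : part (0 : Multiset ℕ) 0 = 0 := by simp [part, parts]

lemma part_foldr (z : ℕ) (hz : 1 ≤ z) (l : List ℕ) :
    part (l.foldr (fun x acc => psAdd (sPart x z) acc) 0) 0
      = (l.map (fun x => min x z)).sum := by
  induction l with
  | nil => simpa using part_zero_zero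
  | cons x l ih =>
    simp only [List.foldr_cons, List.map_cons, List.sum_cons]
    rw [part_psAdd, part_sPart_zero x z hz, ih]

lemma coe_parts (p : Multiset ℕ) : ((parts p : List ℕ) : Multiset ℕ) = p := by
  simp [parts]

lemma part_dcom_zero (z : ℕ) (hz : 1 ≤ z) (p : Multiset ℕ) :
    part (dcom z p) 0 = (p.map (fun x => min x z)).sum := by
  rw [dcom, part_foldr z hz]
  have h : ((p.map (fun x => min x z)))
      = (((parts p).map (fun x => min x z) : List ℕ) : Multiset ℕ) := by
    rw [← Multiset.map_coe, coe_parts]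
  rw [h, Multiset.sum_coe]

lemma sum_ite_min (x z : ℕ) :
    ∑ j ∈ Finset.range z, (if j + 1 ≤ x then 1 else 0) = min x z := by
  induction z with
  | zero => simp
  | succ n ih => rw [Finset.sum_range_succ, ih]; split <;> omega

lemma col_sum (z : ℕ) (p : Multiset ℕ) :
    ∑ j ∈ Finset.range z, Multiset.card (p.filter (fun x => j + 1 ≤ x))
      = (p.map (fun x => min x z)).sum := by
  induction p using Multiset.induction with
  | empty => simp
  | cons a s ih =>
    simp only [Multiset.filter_cons, Multiset.map_cons, Multiset.sum_cons]
    rw [← ih, ← sum_ite_min a z, ← Finset.sum_add_distrib]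
    apply Finset.sum_congr rfl
    intro j _
    rw [Multiset.card_add]
    congr 1
    split <;> simp

end Aux

/-- the largest part of `d_com^{(z)}(p)` is `Σ_i min(p_i, z)`, which equals the
number of boxes in the first `z` columns of the Young diagram of `p`. -/
theorem stmt1 (z : ℕ) (hz : 1 ≤ z) (p : Multiset ℕ) (hp : IsPartition p) :
    part (dcom z p) 0 = (p.map (fun x => min x z)).sum ∧
    part (dcom z p) 0 = ∑ j ∈ Finset.range z, part (transpose p) j := by
  constructor
  · exact part_dcom_zero z hz p
  · rw [part_dcom_zero z hz p, ← col_sum z p]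
    apply Finset.sum_congr rfl
    intro j _
    exact (part_transpose p j).symm

end PartStmt
end

section
/- For every k ≥ 1 and every integer (or indeterminate) n, one has Σ_{w ∈ B_k} sgn(w) · n^{d(w)} = Π_{i=1}^{k} (n − (2i−1)), where B_k is the group of signed permutations of {1,...,k} acting on R^k by permuting coordinates and changing signs, sgn(w) is the determinant of w as a linear map on R^k, and d(w) = dim of the fixed subspace of w in R^k. -/
namespace PartStmt

/-- The signed-permutation matrix of an element `(ε, σ)` of the hyperoctahedral group `B_k`:
it sends `e_j` to `ε(σ j) · e_{σ j}`. -/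
def signedPermMatrix {k : ℕ} (w : (Fin k → ℤˣ) × Equiv.Perm (Fin k)) :
    Matrix (Fin k) (Fin k) ℝ :=
  Matrix.of fun i j => if w.2 j = i then ((w.1 i : ℤ) : ℝ) else 0


/-! ### Auxiliary material for Statement 16 -/

section Stmt16Aux

open Module Equiv

variable {k : ℕ}

/-- The fixed subspace of a signed permutation. -/
noncomputable def Fix (w : (Fin k → ℤˣ) × Equiv.Perm (Fin k)) : Submodule ℝ (Fin k → ℝ) :=
  Module.End.eigenspace (Matrix.toLin' (signedPermMatrix w)) 1

/-- The dimension of the fixed subspace. -/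
noncomputable def dd (w : (Fin k → ℤˣ) × Equiv.Perm (Fin k)) : ℕ :=
  Module.finrank ℝ (Fix w)

/-- The summand in the theorem. -/
noncomputable def term (n : ℝ) (w : (Fin k → ℤˣ) × Equiv.Perm (Fin k)) : ℝ :=
  (signedPermMatrix w).det * n ^ dd w

lemma mulVec_signedPermMatrix (w : (Fin k → ℤˣ) × Equiv.Perm (Fin k)) (v : Fin k → ℝ)
    (i : Fin k) :
    (signedPermMatrix w).mulVec v i = ((w.1 i : ℤ) : ℝ) * v (w.2⁻¹ i) := by
  classical
  unfold Matrix.mulVec dotProduct signedPermMatrix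
  simp only [Matrix.of_apply]
  rw [Finset.sum_eq_single (w.2⁻¹ i)]
  · simp
  · intro b _ hb
    rw [if_neg, zero_mul]
    intro h
    exact hb (by simpa using congrArg (w.2⁻¹ ·) h)
  · simp

lemma mem_Fix {w : (Fin k → ℤˣ) × Equiv.Perm (Fin k)} {v : Fin k → ℝ} :
    v ∈ Fix w ↔ ∀ j, v (w.2 j) = ((w.1 (w.2 j) : ℤ) : ℝ) * v j := by
  rw [Fix, Module.End.mem_eigenspace_iff, one_smul]
  constructor
  · intro h j
    have h' := congrFun h (w.2 j)
    rw [Matrix.toLin'_apply, mulVec_signedPermMatrix] at h'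
    simpa using h'.symm
  · intro h
    rw [Matrix.toLin'_apply]
    funext i
    rw [mulVec_signedPermMatrix]
    have := h (w.2⁻¹ i)
    simpa using this.symm

lemma mem_Fix' {ε : Fin k → ℤˣ} {σ : Equiv.Perm (Fin k)} {v : Fin k → ℝ} :
    v ∈ Fix (ε, σ) ↔ ∀ j, v (σ j) = ((ε (σ j) : ℤ) : ℝ) * v j := mem_Fix

lemma det_signedPermMatrix (ε : Fin k → ℤˣ) (σ : Equiv.Perm (Fin k)) :
    (signedPermMatrix (ε, σ)).det =
      ((Equiv.Perm.sign σ : ℤ) : ℝ) * ∏ i, ((ε i : ℤ) : ℝ) := by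
  classical
  have hm : signedPermMatrix (ε, σ) =
      Matrix.diagonal (fun i => ((ε i : ℤ) : ℝ)) * (σ⁻¹).permMatrix ℝ := by
    ext i j
    rw [Matrix.diagonal_mul]
    simp only [signedPermMatrix, Matrix.of_apply, Equiv.Perm.permMatrix,
      PEquiv.toMatrix_apply, Equiv.toPEquiv_apply, Option.mem_def, Option.some.injEq]
    by_cases h : σ j = i
    · rw [if_pos h, if_pos, mul_one]
      exact Equiv.Perm.inv_eq_iff_eq.2 h.symm
    · rw [if_neg h, if_neg, mul_zero]
      intro hc
      exact h (by rw [← hc]; simp)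
  rw [hm, Matrix.det_mul, Matrix.det_diagonal, Matrix.det_permutation,
    Equiv.Perm.sign_inv, mul_comm]

lemma finrank_eq_of_maps {V W : Type*} [AddCommGroup V] [Module ℝ V]
    [AddCommGroup W] [Module ℝ W]
    (E : Submodule ℝ V) (F : Submodule ℝ W) (φ : V →ₗ[ℝ] W)
    (hmap : ∀ v ∈ E, φ v ∈ F)
    (hinj : ∀ v ∈ E, φ v = 0 → v = 0)
    (hsurj : ∀ u ∈ F, ∃ v ∈ E, φ v = u) :
    Module.finrank ℝ E = Module.finrank ℝ F := by
  have hbij : Function.Bijective (φ.restrict hmap) := by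
    constructor
    · intro x y hxy
      have h0 : φ (x.1 - y.1) = 0 := by
        rw [map_sub, sub_eq_zero]
        exact congrArg Subtype.val hxy
      have := hinj _ (sub_mem x.2 y.2) h0
      exact Subtype.ext (by rwa [sub_eq_zero] at this)
    · intro u
      obtain ⟨v, hv, huv⟩ := hsurj u.1 u.2
      exact ⟨⟨v, hv⟩, Subtype.ext huv⟩
  exact (LinearEquiv.ofBijective _ hbij).finrank_eq

lemma mem_Fix_cons_zero {s : ℤˣ} {ε : Fin k → ℤˣ} {σ : Equiv.Perm (Fin k)}
    {v : Fin (k+1) → ℝ} :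
    v ∈ Fix (Fin.cons s ε, Equiv.Perm.decomposeFin.symm (0, σ)) ↔
      (v 0 = ((s : ℤ) : ℝ) * v 0) ∧
      ∀ x, v ((σ x).succ) = ((ε (σ x) : ℤ) : ℝ) * v x.succ := by
  rw [mem_Fix]
  constructor
  · intro h
    constructor
    · have := h 0
      simpa [Equiv.Perm.decomposeFin_symm_apply_zero] using this
    · intro x
      have := h x.succ
      rw [Equiv.Perm.decomposeFin_symm_apply_succ] at this
      simpa [Equiv.swap_self, Fin.cons_succ] using this
  · rintro ⟨h1, h2⟩ j
    refine Fin.cases ?_ ?_ j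
    · simpa [Equiv.Perm.decomposeFin_symm_apply_zero] using h1
    · intro x
      rw [Equiv.Perm.decomposeFin_symm_apply_succ]
      simpa [Equiv.swap_self, Fin.cons_succ] using h2 x

lemma mem_Fix_cons_succ {s : ℤˣ} {ε : Fin k → ℤˣ} {σ : Equiv.Perm (Fin k)} {q : Fin k}
    {v : Fin (k+1) → ℝ} :
    v ∈ Fix (Fin.cons s ε, Equiv.Perm.decomposeFin.symm (q.succ, σ)) ↔
      (v q.succ = ((ε q : ℤ) : ℝ) * v 0) ∧
      (∀ x, σ x = q → v 0 = ((s : ℤ) : ℝ) * v x.succ) ∧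
      (∀ x, σ x ≠ q → v ((σ x).succ) = ((ε (σ x) : ℤ) : ℝ) * v x.succ) := by
  rw [mem_Fix]
  constructor
  · intro h
    refine ⟨?_, ?_, ?_⟩
    · have := h 0
      simpa [Equiv.Perm.decomposeFin_symm_apply_zero, Fin.cons_succ] using this
    · intro x hx
      have := h x.succ
      rw [Equiv.Perm.decomposeFin_symm_apply_succ, hx, Equiv.swap_apply_right] at this
      simpa using this
    · intro x hx
      have := h x.succ
      rw [Equiv.Perm.decomposeFin_symm_apply_succ,
        Equiv.swap_apply_of_ne_of_ne (Fin.succ_ne_zero _)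
          (by simpa [Fin.succ_inj] using hx)] at this
      simpa [Fin.cons_succ] using this
  · rintro ⟨h1, h2, h3⟩ j
    refine Fin.cases ?_ ?_ j
    · simpa [Equiv.Perm.decomposeFin_symm_apply_zero, Fin.cons_succ] using h1
    · intro x
      rw [Equiv.Perm.decomposeFin_symm_apply_succ]
      by_cases hx : σ x = q
      · rw [hx, Equiv.swap_apply_right]
        simpa using h2 x hx
      · rw [Equiv.swap_apply_of_ne_of_ne (Fin.succ_ne_zero _)
          (by simpa [Fin.succ_inj] using hx)]
        simpa [Fin.cons_succ] using h3 x hx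

lemma dd_cons_succ (s : ℤˣ) (ε : Fin k → ℤˣ) (σ : Equiv.Perm (Fin k)) (q : Fin k) :
    dd (Fin.cons s ε, Equiv.Perm.decomposeFin.symm (q.succ, σ)) =
      dd (Function.update ε q (s * ε q), σ) := by
  classical
  apply finrank_eq_of_maps _ _ (LinearMap.funLeft ℝ ℝ Fin.succ)
  · intro v hv
    rw [mem_Fix_cons_succ] at hv
    obtain ⟨h1, h2, h3⟩ := hv
    rw [mem_Fix']
    intro x
    simp only [LinearMap.funLeft_apply]
    by_cases hx : σ x = q
    · rw [hx, Function.update_self]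
      have e2 := h2 x hx
      push_cast [Units.val_mul]
      rw [h1, e2]
      ring
    · rw [Function.update_of_ne hx]
      exact h3 x hx
  · intro v hv h0
    rw [mem_Fix_cons_succ] at hv
    have hz : ∀ x : Fin k, v x.succ = 0 := by
      intro x
      have := congrFun h0 x
      simpa using this
    funext j
    refine Fin.cases ?_ ?_ j
    · have := hv.2.1 (σ⁻¹ q) (by simp)
      rw [this, hz]
      simp
    · intro x
      simpa using hz x
  · intro u hu
    rw [mem_Fix'] at hu
    refine ⟨Fin.cons (((s : ℤ) : ℝ) * u (σ⁻¹ q)) u, ?_, ?_⟩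
    · rw [mem_Fix_cons_succ]
      refine ⟨?_, ?_, ?_⟩
      · have := hu (σ⁻¹ q)
        rw [(by simp : σ (σ⁻¹ q) = q), Function.update_self] at this
        rw [Fin.cons_succ, Fin.cons_zero, this]
        push_cast [Units.val_mul]
        ring
      · intro x hx
        have hxq : x = σ⁻¹ q := by rw [← hx]; simp
        subst hxq
        rw [Fin.cons_zero, Fin.cons_succ]
      · intro x hx
        have := hu x
        rw [Function.update_of_ne hx] at this
        simpa [Fin.cons_succ] using this
    · funext x
      simp [LinearMap.funLeft_apply, Fin.cons_succ]

lemma dd_cons_zero_neg (ε : Fin k → ℤˣ) (σ : Equiv.Perm (Fin k)) :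
    dd (Fin.cons (-1) ε, Equiv.Perm.decomposeFin.symm (0, σ)) = dd (ε, σ) := by
  classical
  apply finrank_eq_of_maps _ _ (LinearMap.funLeft ℝ ℝ Fin.succ)
  · intro v hv
    rw [mem_Fix_cons_zero] at hv
    rw [mem_Fix']
    intro x
    simpa using hv.2 x
  · intro v hv h0
    rw [mem_Fix_cons_zero] at hv
    have h00 : v 0 = 0 := by
      have := hv.1
      simp at this
      linarith
    funext j
    refine Fin.cases h00 ?_ j
    intro x
    simpa using congrFun h0 x
  · intro u hu
    rw [mem_Fix'] at hu
    refine ⟨Fin.cons 0 u, ?_, ?_⟩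
    · rw [mem_Fix_cons_zero]
      refine ⟨by simp, ?_⟩
      intro x
      simpa [Fin.cons_succ] using hu x
    · funext x
      simp [LinearMap.funLeft_apply, Fin.cons_succ]

/-- Adding a positive fixed point: the fixed space gains one dimension. -/
noncomputable def fixConsOneEquiv (ε : Fin k → ℤˣ) (σ : Equiv.Perm (Fin k)) :
    (Fix (Fin.cons 1 ε, Equiv.Perm.decomposeFin.symm (0, σ))) ≃ₗ[ℝ] ℝ × (Fix (ε, σ)) where
  toFun v := (v.1 0, ⟨fun x => v.1 x.succ, by
    rw [mem_Fix']
    intro x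
    exact (mem_Fix_cons_zero.1 v.2).2 x⟩)
  map_add' x y := rfl
  map_smul' c x := rfl
  invFun z := ⟨Fin.cons z.1 z.2.1, by
    rw [mem_Fix_cons_zero]
    refine ⟨by simp, ?_⟩
    intro x
    simpa [Fin.cons_succ] using (mem_Fix'.1 z.2.2) x⟩
  left_inv v := Subtype.ext (Fin.cons_self_tail v.1)
  right_inv z := by
    refine Prod.ext ?_ (Subtype.ext (funext fun x => ?_)) <;> simp [Fin.cons_succ]

lemma dd_cons_zero_one (ε : Fin k → ℤˣ) (σ : Equiv.Perm (Fin k)) :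
    dd (Fin.cons 1 ε, Equiv.Perm.decomposeFin.symm (0, σ)) = dd (ε, σ) + 1 := by
  rw [dd, (fixConsOneEquiv ε σ).finrank_eq, Module.finrank_prod, Module.finrank_self]
  rw [add_comm]
  rfl

lemma sum_units (f : ℤˣ → ℝ) : ∑ s : ℤˣ, f s = f 1 + f (-1) := by
  have h : (Finset.univ : Finset ℤˣ) = {1, -1} := by
    ext x
    rcases Int.units_eq_one_or x with h | h <;> simp [h]
  rw [h, Finset.sum_insert (by decide), Finset.sum_singleton]

lemma prod_update_units (ε : Fin k → ℤˣ) (q : Fin k) (s : ℤˣ) :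
    ∏ i, ((Function.update ε q (s * ε q) i : ℤ) : ℝ)
      = ((s : ℤ) : ℝ) * ∏ i, ((ε i : ℤ) : ℝ) := by
  classical
  have hupd : ∀ i, ((Function.update ε q (s * ε q) i : ℤ) : ℝ) =
      Function.update (fun i => ((ε i : ℤ) : ℝ)) q (((s * ε q : ℤˣ) : ℤ) : ℝ) i :=
    fun i => Function.apply_update (fun _ (u : ℤˣ) => ((u : ℤ) : ℝ)) ε q (s * ε q) i
  simp only [hupd]
  rw [Finset.prod_update_of_mem (Finset.mem_univ q),
    Finset.prod_eq_mul_prod_sdiff_singleton_of_mem (Finset.mem_univ q) (fun i => ((ε i : ℤ) : ℝ))]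
  push_cast [Units.val_mul]
  ring

lemma term_cons_zero_one (n : ℝ) (ε : Fin k → ℤˣ) (σ : Equiv.Perm (Fin k)) :
    term n (Fin.cons 1 ε, Equiv.Perm.decomposeFin.symm (0, σ)) = n * term n (ε, σ) := by
  rw [term, term, dd_cons_zero_one, det_signedPermMatrix, det_signedPermMatrix,
    Equiv.Perm.decomposeFin.symm_sign, Fin.prod_univ_succ]
  simp only [Fin.cons_succ, Fin.cons_zero, eq_self_iff_true, if_true, one_mul, Units.val_one,
    Int.cast_one, pow_succ]
  ring

lemma term_cons_zero_neg (n : ℝ) (ε : Fin k → ℤˣ) (σ : Equiv.Perm (Fin k)) :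
    term n (Fin.cons (-1) ε, Equiv.Perm.decomposeFin.symm (0, σ)) = -term n (ε, σ) := by
  rw [term, term, dd_cons_zero_neg, det_signedPermMatrix, det_signedPermMatrix,
    Equiv.Perm.decomposeFin.symm_sign, Fin.prod_univ_succ]
  simp only [Fin.cons_succ, Fin.cons_zero, eq_self_iff_true, if_true, one_mul, Units.val_neg,
    Units.val_one, Int.cast_neg, Int.cast_one]
  ring

lemma term_cons_succ (n : ℝ) (s : ℤˣ) (ε : Fin k → ℤˣ) (σ : Equiv.Perm (Fin k)) (q : Fin k) :
    term n (Fin.cons s ε, Equiv.Perm.decomposeFin.symm (q.succ, σ)) =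
      -term n (Function.update ε q (s * ε q), σ) := by
  rw [term, term, dd_cons_succ, det_signedPermMatrix, det_signedPermMatrix,
    Equiv.Perm.decomposeFin.symm_sign, Fin.prod_univ_succ, prod_update_units]
  simp only [Fin.cons_succ, Fin.cons_zero, if_neg (Fin.succ_ne_zero q), Units.val_mul,
    Units.val_neg, Units.val_one, Int.cast_neg, Int.cast_mul, Int.cast_one]
  ring

lemma sum_term_succ (n : ℝ) (k : ℕ) :
    ∑ w : (Fin (k+1) → ℤˣ) × Equiv.Perm (Fin (k+1)), term n w =
      (n - (2 * (k : ℝ) + 1)) * ∑ w : (Fin k → ℤˣ) × Equiv.Perm (Fin k), term n w := by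
  classical
  set A := ∑ w : (Fin k → ℤˣ) × Equiv.Perm (Fin k), term n w with hA
  have hApair : ∑ ε : Fin k → ℤˣ, ∑ σ : Equiv.Perm (Fin k), term n (ε, σ) = A := by
    rw [hA, Fintype.sum_prod_type]
  have key : ∀ (p : Fin (k+1)) (s : ℤˣ),
      (∑ ε : Fin k → ℤˣ, ∑ σ : Equiv.Perm (Fin k),
        term n (Fin.cons s ε, Equiv.Perm.decomposeFin.symm (p, σ))) =
      (if p = 0 then (if s = 1 then n else -1) else -1) * A := by
    intro p
    refine Fin.cases ?_ ?_ p <;> [skip; intro q] <;> intro s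
    · rcases Int.units_eq_one_or s with hs | hs <;> subst hs
      · rw [if_pos rfl, if_pos rfl]
        simp only [term_cons_zero_one, ← Finset.mul_sum, hApair]
      · rw [if_pos rfl, if_neg (by decide)]
        simp only [term_cons_zero_neg, Finset.sum_neg_distrib, hApair]
        ring
    · rw [if_neg (Fin.succ_ne_zero q)]
      simp only [term_cons_succ, Finset.sum_neg_distrib]
      have hb : Function.Bijective (fun ε : Fin k → ℤˣ => Function.update ε q (s * ε q)) := by
        have hinv : Function.Involutive
            (fun ε : Fin k → ℤˣ => Function.update ε q (s * ε q)) := by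
          intro ε
          funext i
          by_cases h : i = q
          · subst h
            simp [Function.update_self, ← mul_assoc, Int.units_mul_self]
          · simp [Function.update_of_ne h]
        exact hinv.bijective
      have hre : (∑ ε : Fin k → ℤˣ, ∑ σ : Equiv.Perm (Fin k),
          term n (Function.update ε q (s * ε q), σ)) =
          ∑ ε : Fin k → ℤˣ, ∑ σ : Equiv.Perm (Fin k), term n (ε, σ) :=
        Fintype.sum_bijective _ hb _ _ (fun ε => rfl)
      rw [hre, hApair]
      ring
  have e1 : ∑ w : (Fin (k+1) → ℤˣ) × Equiv.Perm (Fin (k+1)), term n w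
      = ∑ x : (ℤˣ × (Fin k → ℤˣ)) × (Fin (k+1) × Equiv.Perm (Fin k)),
          term n (Fin.cons x.1.1 x.1.2, Equiv.Perm.decomposeFin.symm x.2) := by
    rw [← Equiv.sum_comp (Equiv.prodCongr (Fin.consEquiv (fun _ : Fin (k+1) => ℤˣ))
      Equiv.Perm.decomposeFin.symm) (term n)]
    rfl
  rw [e1]
  simp only [Fintype.sum_prod_type]
  have e2 : ∀ s : ℤˣ,
      (∑ ε : Fin k → ℤˣ, ∑ p : Fin (k+1), ∑ σ : Equiv.Perm (Fin k),
        term n (Fin.cons s ε, Equiv.Perm.decomposeFin.symm (p, σ))) =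
      ∑ p : Fin (k+1), (if p = 0 then (if s = 1 then n else -1) else -1) * A := by
    intro s
    rw [Finset.sum_comm]
    exact Finset.sum_congr rfl fun p _ => key p s
  rw [Finset.sum_congr rfl fun s _ => e2 s]
  simp only [← Finset.sum_mul]
  rw [sum_units,
    Fin.sum_univ_succ, Fin.sum_univ_succ]
  simp only [if_pos rfl, if_neg (show ¬((-1 : ℤˣ) = 1) by decide),
    if_neg (Fin.succ_ne_zero _), Finset.sum_const, Finset.card_univ, Fintype.card_fin,
    nsmul_eq_mul]
  push_cast
  ring

lemma sum_term_zero (n : ℝ) :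
    ∑ w : (Fin 0 → ℤˣ) × Equiv.Perm (Fin 0), term n w = 1 := by
  have hdd : ∀ w : (Fin 0 → ℤˣ) × Equiv.Perm (Fin 0), dd w = 0 := by
    intro w
    have h1 : dd w ≤ Module.finrank ℝ (Fin 0 → ℝ) := Submodule.finrank_le _
    have h2 : Module.finrank ℝ (Fin 0 → ℝ) = 0 := by simp
    omega
  have hterm : ∀ w : (Fin 0 → ℤˣ) × Equiv.Perm (Fin 0), term n w = 1 := by
    intro w
    rw [term, hdd, pow_zero, Matrix.det_fin_zero, one_mul]
  rw [Fintype.sum_congr _ _ hterm]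
  simp

lemma sum_term_eq (n : ℝ) (k : ℕ) :
    ∑ w : (Fin k → ℤˣ) × Equiv.Perm (Fin k), term n w =
      ∏ i ∈ Finset.range k, (n - (2 * (i : ℝ) + 1)) := by
  induction k with
  | zero => simpa using sum_term_zero n
  | succ k ih =>
    rw [sum_term_succ, ih, Finset.prod_range_succ, mul_comm]

end Stmt16Aux

/-- `Σ_{w ∈ B_k} sgn(w) n^{d(w)} = Π_{i=1}^{k} (n - (2i-1))`, where
`sgn(w) = det w` and `d(w)` is the dimension of the fixed subspace of `w` on `ℝ^k`. -/
theorem stmt16 (k : ℕ) (hk : 1 ≤ k) (n : ℝ) :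
    ∑ w : (Fin k → ℤˣ) × Equiv.Perm (Fin k),
      (signedPermMatrix w).det *
        n ^ (Module.finrank ℝ
          (Module.End.eigenspace (Matrix.toLin' (signedPermMatrix w)) 1)) =
      ∏ i ∈ Finset.range k, (n - (2 * (i : ℝ) + 1)) := by
  have h := sum_term_eq n k
  simp only [term, dd, Fix] at h
  exact h

end PartStmt
end
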